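/- arXiv:math/0501489 — 8 statements merged into one kernel-verified Lean document; each statement's English description precedes it below -/
import Mathlib

section
/- Let L be a complete lattice. L is completely distributive in the constructive sense (i.e., the map sending a downset to its supremum has a left adjoint) if and only if for every b ∈ L, b = sSup { a | a ⋘ b }, where ⋘ is the totally-below relation. -/
def TotallyBelow {L : Type*} [CompleteLattice L] (a b : L) : Prop :=
  ∀ S : Set L, b ≤ sSup S → ∃ s ∈ S, a ≤ s

/-- Constructive complete distributivity: the map sending a downset to its
supremum has a left adjoint. -/
def CompletelyDistributive (L : Type*) [CompleteLattice L] : Prop :=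
  ∃ t : L → LowerSet L, Monotone t ∧
    ∀ (a : L) (D : LowerSet L), t a ≤ D ↔ a ≤ sSup (D : Set L)

/-! If `t ⊣ sSup`, every element of `t b` lies in every downset whose supremum is at least `b`;
testing against the lower closure of an arbitrary set (which has the same supremum) shows it is
totally below `b`. Hence `b ≤ sSup (t b)` gives `b = sSup {a | a ⋘ b}`. Conversely, if every `b`
is the supremum of the downset `{a | a ⋘ b}`, that downset is the left adjoint. -/

section

variable {L : Type*} [CompleteLattice L]

theorem sSup_lowerClosure (S : Set L) : sSup (lowerClosure S : Set L) = sSup S :=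
  le_antisymm (sSup_le fun _ ⟨_, hs, hxs⟩ => hxs.trans (le_sSup hs))
    (sSup_le_sSup subset_lowerClosure)

namespace TotallyBelow

variable {a a' b b' : L}

theorem le (h : TotallyBelow a b) : a ≤ b := by
  obtain ⟨s, rfl, has⟩ := h {b} (by simp)
  exact has

theorem of_le_left (h : TotallyBelow a b) (ha : a' ≤ a) : TotallyBelow a' b := fun S hS =>
  let ⟨s, hs, has⟩ := h S hS
  ⟨s, hs, ha.trans has⟩

theorem of_le_right (h : TotallyBelow a b) (hb : b ≤ b') : TotallyBelow a b' := fun S hS =>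
  h S (hb.trans hS)

theorem mem_of_le_sSup (h : TotallyBelow a b) {D : LowerSet L} (hD : b ≤ sSup (D : Set L)) :
    a ∈ D :=
  let ⟨_, hs, has⟩ := h D hD
  D.lower has hs

theorem of_forall_lowerSet (h : ∀ D : LowerSet L, b ≤ sSup (D : Set L) → a ∈ D) :
    TotallyBelow a b := fun S hS =>
  mem_lowerClosure.mp (h (lowerClosure S) ((sSup_lowerClosure S).symm ▸ hS))

end TotallyBelow

variable (L) in
def totallyBelowLowerSet : L →o LowerSet L where
  toFun b := ⟨{a | TotallyBelow a b}, fun _ _ h ha => ha.of_le_left h⟩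
  monotone' _ _ hb _ ha := ha.of_le_right hb

theorem sSup_totallyBelow_le (b : L) : sSup {a | TotallyBelow a b} ≤ b :=
  sSup_le fun _ h => h.le

theorem totallyBelow_of_mem_leftAdjoint {t : L → LowerSet L}
    (ht : ∀ (a : L) (D : LowerSet L), t a ≤ D ↔ a ≤ sSup (D : Set L)) {a b : L} (ha : a ∈ t b) :
    TotallyBelow a b :=
  TotallyBelow.of_forall_lowerSet fun D hD => (ht b D).mpr hD ha

end

theorem completelyDistributive_iff_totallyContinuous {L : Type*} [CompleteLattice L] :
    CompletelyDistributive L ↔ ∀ b : L, b = sSup { a | TotallyBelow a b } := by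
  constructor
  · rintro ⟨t, -, ht⟩ b
    have hb : b ≤ sSup (t b : Set L) := (ht b (t b)).mp le_rfl
    exact le_antisymm (hb.trans (sSup_le_sSup fun _ => totallyBelow_of_mem_leftAdjoint ht))
      (sSup_totallyBelow_le b)
  · intro h
    refine ⟨totallyBelowLowerSet L, (totallyBelowLowerSet L).monotone, fun a D => ⟨?_, ?_⟩⟩
    · intro hD
      calc a = sSup {x | TotallyBelow x a} := h a
        _ ≤ sSup (D : Set L) := sSup_le_sSup hD
    · exact fun ha _ hx => hx.mem_of_le_sSup ha
end

section
/- Let L be a complete lattice such that every b ∈ L satisfies b = sSup { a | a ⋘ b }. Then the totally-below relation interpolates: if a ⋘ b then there exists c with a ⋘ c and c ⋘ b. -/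
theorem totallyBelow_interpolates {L : Type*} [CompleteLattice L]
    (htc : ∀ b : L, b = sSup { a | TotallyBelow a b })
    {a b : L} (h : TotallyBelow a b) :
    ∃ c : L, TotallyBelow a c ∧ TotallyBelow c b := by
  set S : Set L := {d | ∃ c, TotallyBelow c b ∧ TotallyBelow d c} with hS
  have hbS : b ≤ sSup S := by
    conv_lhs => rw [htc b]
    apply sSup_le
    intro c hc
    calc c = sSup {d | TotallyBelow d c} := htc c
      _ ≤ sSup S := sSup_le_sSup (fun d hd => ⟨c, hc, hd⟩)
  obtain ⟨d, ⟨c, hcb, hdc⟩, had⟩ := h S hbS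
  exact ⟨c, fun T hT => by obtain ⟨s, hs, hds⟩ := hdc T hT; exact ⟨s, hs, had.trans hds⟩, hcb⟩
end

section
/- Let L be a totally continuous complete lattice. Then the totally-below relation ⋘, viewed as a binary relation on L, is idempotent with respect to relational composition: a ⋘ b holds if and only if there exists c with a ⋘ c and c ⋘ b. -/
theorem totallyBelow_idempotent {L : Type*} [CompleteLattice L]
    (htc : ∀ b : L, b = sSup { a | TotallyBelow a b }) (a b : L) :
    TotallyBelow a b ↔ ∃ c : L, TotallyBelow a c ∧ TotallyBelow c b := by
  constructor
  · intro hab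
    set S : Set L := {d | ∃ c, TotallyBelow d c ∧ TotallyBelow c b} with hS
    have hb : b ≤ sSup S := by
      calc b = sSup { c | TotallyBelow c b } := htc b
        _ ≤ sSup S := by
          apply sSup_le
          intro c hc
          calc c = sSup { d | TotallyBelow d c } := htc c
            _ ≤ sSup S := sSup_le_sSup (fun d hd => ⟨c, hd, hc⟩)
    obtain ⟨s, ⟨c, hsc, hcb⟩, has⟩ := hab S hb
    exact ⟨c, fun T hT => (hsc T hT).imp (fun t ⟨ht, hst⟩ => ⟨ht, has.trans hst⟩), hcb⟩
  · rintro ⟨c, hac, hcb⟩ S hb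
    obtain ⟨s, hs, hcs⟩ := hcb S hb
    obtain ⟨t, ht, hat⟩ := hac {s} (by simpa using hcs)
    exact ⟨s, hs, ht ▸ hat⟩
end

section
/- Let L be a complete lattice. Then L is completely distributive (in the sense that sup : Downsets(L) → L has a left adjoint) if and only if L is a retract, in the category of complete lattices and sSup-preserving maps, of the lattice of downsets of some preordered set. -/
theorem completelyDistributive_iff_retract_of_downsets {L : Type u} [CompleteLattice L] :
    CompletelyDistributive L ↔
      ∃ (X : Type u) (_ : Preorder X) (s : L → LowerSet X) (r : LowerSet X → L),
        (∀ S : Set L, s (sSup S) = sSup (s '' S)) ∧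
        (∀ T : Set (LowerSet X), r (sSup T) = sSup (r '' T)) ∧
        ∀ a : L, r (s a) = a := by
  constructor
  · rintro ⟨t, ht, hadj⟩
    refine ⟨L, inferInstance, t, fun D => sSup (D : Set L), ?_, ?_, ?_⟩
    · intro S
      apply le_antisymm
      · refine (hadj _ _).2 (sSup_le fun a ha => (hadj a _).1 ?_)
        exact le_sSup ⟨a, ha, rfl⟩
      · exact sSup_le (by rintro _ ⟨a, ha, rfl⟩; exact ht (le_sSup ha))
    · intro T
      apply le_antisymm
      · refine sSup_le fun b hb => ?_
        rw [LowerSet.coe_sSup] at hb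
        obtain ⟨D, hD, hbD⟩ := Set.mem_iUnion₂.1 hb
        exact le_trans (le_sSup hbD) (le_sSup ⟨D, hD, rfl⟩)
      · refine sSup_le ?_
        rintro _ ⟨D, hD, rfl⟩
        refine sSup_le_sSup fun b hb => ?_
        rw [LowerSet.coe_sSup]
        exact Set.mem_iUnion₂.2 ⟨D, hD, hb⟩
    · intro a
      apply le_antisymm
      · have h1 : t a ≤ LowerSet.Iic a := by
          refine (hadj a _).2 ?_
          rw [LowerSet.coe_Iic]
          exact le_of_eq (csSup_Iic (a := a)).symm
        calc sSup ((t a : Set L)) ≤ sSup ((LowerSet.Iic a : Set L)) := sSup_le_sSup h1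
          _ = a := by rw [LowerSet.coe_Iic]; exact csSup_Iic
      · exact (hadj a (t a)).1 le_rfl
  · rintro ⟨X, _, s, r, hs, hr, hrs⟩
    have hsmono : Monotone s := by
      intro a b hab
      have h2 : s a ⊔ s b = s b := by
        have := hs {a, b}
        rw [sSup_pair, sup_eq_right.2 hab, Set.image_pair, sSup_pair] at this
        exact this.symm
      rw [← h2]; exact le_sup_left
    have hrmono : Monotone r := by
      intro D E hDE
      have h2 : r D ⊔ r E = r E := by
        have := hr {D, E}
        rw [sSup_pair, sup_eq_right.2 hDE, Set.image_pair, sSup_pair] at this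
        exact this.symm
      rw [← h2]; exact le_sup_left
    -- every lower set is the sup of principal lower sets
    have hrep : ∀ E : LowerSet X, E = sSup (LowerSet.Iic '' (E : Set X)) := by
      intro E
      apply SetLike.ext
      intro x
      rw [LowerSet.mem_sSup_iff]
      constructor
      · intro hx
        exact ⟨LowerSet.Iic x, ⟨x, hx, rfl⟩, by simp⟩
      · rintro ⟨F, ⟨y, hy, rfl⟩, hxF⟩
        exact E.lower (by simpa using hxF) hy
    refine ⟨fun a => ⟨{b | ∃ x ∈ (s a : Set X), b ≤ r (LowerSet.Iic x)}, ?_⟩, ?_, ?_⟩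
    · rintro b c hcb ⟨x, hx, hb⟩
      exact ⟨x, hx, hcb.trans hb⟩
    · intro a b hab c hc
      obtain ⟨x, hx, hcx⟩ := hc
      exact ⟨x, hsmono hab hx, hcx⟩
    · intro a D
      constructor
      · intro h
        have ha : a = r (s a) := (hrs a).symm
        rw [ha, hrep (s a), hr, sSup_image]
        refine iSup₂_le ?_
        rintro _ ⟨x, hx, rfl⟩
        refine le_sSup ?_
        exact h ⟨x, hx, le_rfl⟩
      · intro h b hb
        obtain ⟨x, hx, hbx⟩ := hb
        have h1 : s a ≤ s (sSup (D : Set L)) := hsmono h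
        rw [hs] at h1
        have hx' : x ∈ (sSup (s '' (D : Set L)) : LowerSet X) := h1 hx
        rw [← SetLike.mem_coe, LowerSet.coe_sSup] at hx'
        obtain ⟨F, ⟨d, hd, rfl⟩, hxF⟩ := Set.mem_iUnion₂.1 hx'
        have hIic : LowerSet.Iic x ≤ s d := by
          intro y hy
          exact (s d).lower (by simpa using hy) hxF
        have : b ≤ d := hbx.trans (by rw [← hrs d]; exact hrmono hIic)
        exact D.lower this hd
end

section
/- A retract of a completely distributive complete lattice (in the constructive sense) is completely distributive: if r : M → L and s : L → M are sSup-preserving maps with r ∘ s = id, and M is completely distributive, then so is L. -/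
theorem retract_completelyDistributive {L M : Type*}
    [CompleteLattice L] [CompleteLattice M]
    (r : M → L) (s : L → M)
    (hr : ∀ T : Set M, r (sSup T) = sSup (r '' T))
    (hs : ∀ S : Set L, s (sSup S) = sSup (s '' S))
    (hrs : ∀ a : L, r (s a) = a)
    (hM : CompletelyDistributive M) :
    CompletelyDistributive L := by
  obtain ⟨tM, htMmono, htM⟩ := hM
  have hrmono : Monotone r := fun x y hxy => by
    have : r (sSup {x, y}) = sSup (r '' {x, y}) := hr _
    have hxy' : sSup ({x, y} : Set M) = y := by
      simp [sSup_pair, sup_eq_right.mpr hxy]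
    rw [hxy'] at this
    rw [this]
    exact le_sSup ⟨x, by simp⟩
  have hsmono : Monotone s := fun x y hxy => by
    have : s (sSup {x, y}) = sSup (s '' {x, y}) := hs _
    have hxy' : sSup ({x, y} : Set L) = y := by
      simp [sSup_pair, sup_eq_right.mpr hxy]
    rw [hxy'] at this
    rw [this]
    exact le_sSup ⟨x, by simp⟩
  refine ⟨fun a => lowerClosure (r '' (tM (s a) : Set M)), ?_, ?_⟩
  · intro a b hab
    exact lowerClosure_mono (Set.image_mono (htMmono (hsmono hab)))
  · intro a D
    constructor
    · intro h
      have hsub : r '' (tM (s a) : Set M) ⊆ (D : Set L) := by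
        intro x hx
        exact h (subset_lowerClosure hx)
      have h1 : s a ≤ sSup ((tM (s a) : LowerSet M) : Set M) :=
        (htM (s a) (tM (s a))).mp le_rfl
      calc a = r (s a) := (hrs a).symm
        _ ≤ r (sSup ((tM (s a) : LowerSet M) : Set M)) := hrmono h1
        _ = sSup (r '' ((tM (s a) : LowerSet M) : Set M)) := hr _
        _ ≤ sSup (D : Set L) := sSup_le_sSup hsub
    · intro h
      have h1 : s a ≤ sSup ((lowerClosure (s '' (D : Set L)) : LowerSet M) : Set M) := by
        calc s a ≤ s (sSup (D : Set L)) := hsmono h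
          _ = sSup (s '' (D : Set L)) := hs _
          _ ≤ sSup ((lowerClosure (s '' (D : Set L)) : LowerSet M) : Set M) :=
            sSup_le_sSup subset_lowerClosure
      have h2 : tM (s a) ≤ lowerClosure (s '' (D : Set L)) :=
        (htM (s a) _).mpr h1
      intro x hx
      obtain ⟨y, ⟨z, hz, rfl⟩, hyx⟩ := hx
      obtain ⟨m, ⟨d, hd, rfl⟩, hzm⟩ := h2 hz
      have : r z ≤ d := by
        have := hrmono hzm
        rwa [hrs] at this
      exact D.lower (le_trans hyx this) hd
end

section
/- Let L be a totally algebraic complete lattice. Then for all a, b ∈ L, a ⋘ b holds if and only if there exists a totally compact c with a ≤ c and c ≤ b. -/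
def TotallyCompact {L : Type*} [CompleteLattice L] (a : L) : Prop :=
  TotallyBelow a a

theorem totallyBelow_iff_through_compact {L : Type*} [CompleteLattice L]
    (hta : ∀ b : L, b = sSup { a | TotallyCompact a ∧ a ≤ b }) (a b : L) :
    TotallyBelow a b ↔ ∃ c : L, TotallyCompact c ∧ a ≤ c ∧ c ≤ b := by
  constructor
  · intro h
    obtain ⟨c, hc, hac⟩ := h { x | TotallyCompact x ∧ x ≤ b } (le_of_eq (hta b))
    exact ⟨c, hc.1, hac, hc.2⟩
  · rintro ⟨c, hc, hac, hcb⟩ S hS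
    obtain ⟨s, hs, hcs⟩ := hc S (hcb.trans hS)
    exact ⟨s, hs, hac.trans hcs⟩
end

section
/- Let X be an idempotent binary relation on a set A (i.e., x ≺ y iff there exists z with x ≺ z and z ≺ y). Then the collection of subsets S ⊆ A satisfying (x ∈ S ↔ ∃ y ∈ S, x ≺ y), ordered by inclusion, is a complete lattice in which arbitrary suprema are given by the ≺-closure of unions. -/
/-- A subset is `≺`-stable when `x ∈ S ↔ ∃ y ∈ S, x ≺ y`. -/
def RelStable {A : Type*} (r : A → A → Prop) (S : Set A) : Prop :=
  ∀ x, x ∈ S ↔ ∃ y ∈ S, r x y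

theorem stable_subsets_complete_lattice {A : Type*} (r : A → A → Prop)
    (idem : ∀ x y, r x y ↔ ∃ z, r x z ∧ r z y) :
    ∀ F : Set {S : Set A // RelStable r S},
      ∃ C : {S : Set A // RelStable r S},
        (C : Set A) = { x | ∃ y ∈ ⋃ S ∈ F, (S : Set A), r x y } ∧
        IsLUB F C := by
  intro F
  set U : Set A := ⋃ S ∈ F, (S : Set A) with hU
  set Cs : Set A := { x | ∃ y ∈ U, r x y } with hCs
  have hstable : RelStable r Cs := by
    intro x
    constructor
    · rintro ⟨y, hyU, hxy⟩
      obtain ⟨z, hxz, hzy⟩ := (idem x y).mp hxy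
      exact ⟨z, ⟨y, hyU, hzy⟩, hxz⟩
    · rintro ⟨y, ⟨w, hwU, hyw⟩, hxy⟩
      exact ⟨w, hwU, (idem x w).mpr ⟨y, hxy, hyw⟩⟩
  refine ⟨⟨Cs, hstable⟩, rfl, ?_, ?_⟩
  · -- upper bound
    rintro ⟨S, hS⟩ hSF x hxS
    obtain ⟨y, hyS, hxy⟩ := (hS x).mp hxS
    exact ⟨y, Set.mem_biUnion hSF hyS, hxy⟩
  · -- least
    rintro ⟨T, hT⟩ hTub x hxC
    obtain ⟨y, hyU, hxy⟩ := hxC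
    obtain ⟨S, hSF, hyS⟩ := Set.mem_iUnion₂.mp hyU
    have hyT : y ∈ T := hTub hSF hyS
    exact (hT x).mpr ⟨y, hyT, hxy⟩
end

section
/- Let A be a set with an idempotent binary relation ≺. Then the complete lattice R(A,≺) of subsets S with (x ∈ S ↔ ∃ y ∈ S, x ≺ y), ordered by inclusion, is totally continuous: every element of R(A,≺) is the supremum of the elements totally below it. -/
/-- The `≺`-closure of a set. -/
def relCl {A : Type*} (r : A → A → Prop) (T : Set A) : Set A :=
  { x | ∃ y ∈ T, r x y }

/-- The totally-below relation on the lattice of stable subsets, where the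
supremum of a family is the `≺`-closure of its union. -/
def TBStable {A : Type*} (r : A → A → Prop)
    (a b : {S : Set A // RelStable r S}) : Prop :=
  ∀ T : Set {S : Set A // RelStable r S},
    (b : Set A) ⊆ relCl r (⋃ S ∈ T, (S : Set A)) →
      ∃ t ∈ T, (a : Set A) ⊆ (t : Set A)

theorem stable_subsets_totally_continuous {A : Type*} (r : A → A → Prop)
    (idem : ∀ x y, r x y ↔ ∃ z, r x z ∧ r z y)
    (b : {S : Set A // RelStable r S}) :
    (b : Set A) = relCl r (⋃ a ∈ { a | TBStable r a b }, (a : Set A)) := by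
  apply Set.Subset.antisymm
  · -- forward inclusion
    intro x hx
    obtain ⟨y, hyb, hxy⟩ := (b.2 x).1 hx
    obtain ⟨z, hxz, hzy⟩ := (idem x y).1 hxy
    -- D_y = {w | r w y} is stable and totally below b, and contains z
    have hDstable : RelStable r {w | r w y} := by
      intro w
      simp only [Set.mem_setOf_eq]
      rw [idem w y]
      constructor
      · rintro ⟨z, hz1, hz2⟩; exact ⟨z, hz2, hz1⟩
      · rintro ⟨z, hz2, hz1⟩; exact ⟨z, hz1, hz2⟩
    have hDtb : TBStable r ⟨{w | r w y}, hDstable⟩ b := by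
      intro T hT
      obtain ⟨u, hu, hyu⟩ := hT hyb
      simp only [Set.mem_iUnion] at hu
      obtain ⟨t, htT, hut⟩ := hu
      refine ⟨t, htT, ?_⟩
      have hyt : y ∈ (t : Set A) := (t.2 y).2 ⟨u, hut, hyu⟩
      intro w hw
      exact (t.2 w).2 ⟨y, hyt, hw⟩
    refine ⟨z, ?_, hxz⟩
    simp only [Set.mem_iUnion]
    exact ⟨⟨{w | r w y}, hDstable⟩, hDtb, hzy⟩
  · -- reverse inclusion
    intro x hx
    obtain ⟨v, hv, hxv⟩ := hx
    simp only [Set.mem_iUnion] at hv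
    obtain ⟨a, ha, hva⟩ := hv
    -- a ⊆ b since TBStable with T = {b}
    have hab : (a : Set A) ⊆ (b : Set A) := by
      obtain ⟨t, ht, hsub⟩ := ha {b} (by
        intro w hw
        obtain ⟨y, hy, hwy⟩ := (b.2 w).1 hw
        exact ⟨y, by simpa using hy, hwy⟩)
      simp only [Set.mem_singleton_iff] at ht
      subst ht; exact hsub
    exact (b.2 x).2 ⟨v, hab hva, hxv⟩
end
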